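/- Let A be an N×N real random matrix and let m : Mat(N,ℝ) → Mat(N,ℝ) be a measurable function satisfying m(a)m(a)ᵀ = a aᵀ for every matrix a. Then there exists a random orthogonal matrix U, measurable with respect to σ(A), such that A = m(A)·U almost surely. -/

import Mathlib

open MeasureTheory ProbabilityTheory Matrix Filter
open scoped ENNReal Topology

noncomputable section

/-- The space of `N × N` real matrices. -/
abbrev Mat (N : ℕ) := Matrix (Fin N) (Fin N) ℝ

instance (N : ℕ) : MeasurableSpace (Mat N) :=
  inferInstanceAs (MeasurableSpace (Fin N → Fin N → ℝ))

instance (N : ℕ) : BorelSpace (Mat N) :=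
  inferInstanceAs (BorelSpace (Fin N → Fin N → ℝ))

open scoped Classical in
/-- The eigenvalues of a matrix (junk value `0` if the matrix is not symmetric). -/
def eigs {N : ℕ} (s : Mat N) : Fin N → ℝ :=
  if h : s.IsHermitian then h.eigenvalues else fun _ => 0

/-- The largest eigenvalue of a symmetric matrix. -/
def lambdaMax {N : ℕ} (s : Mat N) : ℝ := ⨆ i, eigs s i

/-- The eigenvalues of a symmetric matrix in nonincreasing order:
`eigDesc s k` is the `(k+1)`-th largest eigenvalue `λ_{k+1}(s)`. -/
def eigDesc {N : ℕ} (s : Mat N) (k : Fin N) : ℝ :=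
  (eigs s ∘ Tuple.sort (eigs s)) k.rev

open scoped Classical in
/-- The positive semidefinite square root of a positive semidefinite matrix
(junk value `0` otherwise). -/
def msqrt {N : ℕ} (a : Mat N) : Mat N :=
  if h : a.PosSemidef then
    h.1.eigenvectorUnitary.1 * diagonal ((↑) ∘ Real.sqrt ∘ h.1.eigenvalues) *
      (star h.1.eigenvectorUnitary : Mat N)
  else 0

/-- `log⁺ x = max (log x) 0`. -/
def logPlus (x : ℝ) : ℝ := max (Real.log x) 0

/-- The expectation of a (not necessarily integrable) real random variable, with values in
`[-∞, +∞]`: the difference of the lower integrals of the positive and negative parts. -/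
def sInt {Ω : Type*} [MeasurableSpace Ω] (P : Measure Ω) (f : Ω → ℝ) : EReal :=
  ((∫⁻ ω, ENNReal.ofReal (f ω) ∂P : ℝ≥0∞) : EReal) -
    ((∫⁻ ω, ENNReal.ofReal (-f ω) ∂P : ℝ≥0∞) : EReal)

/-- `leftProd A n = A₁ ⋯ A_n` (`0`-indexed: `A 0 * A 1 * ⋯ * A (n-1)`). -/
def leftProd {Ω : Type*} {N : ℕ} (A : ℕ → Ω → Mat N) : ℕ → Ω → Mat N
  | 0 => fun _ => 1
  | n + 1 => fun ω => leftProd A n ω * A n ω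

/-- The top Lyapunov exponent
`γ = inf_{n ≥ 1} (1/n) E[log λ_max(A₁ ⋯ A_n A_nᵀ ⋯ A₁ᵀ)]`, a value in `[-∞, +∞)`. -/
def lyap {Ω : Type*} [MeasurableSpace Ω] {N : ℕ} (P : Measure Ω) (A : ℕ → Ω → Mat N) : EReal :=
  ⨅ n : ℕ, (((1 : ℝ) / (n + 1) : ℝ) : EReal) *
    sInt P (fun ω => Real.log (lambdaMax (leftProd A (n + 1) ω * (leftProd A (n + 1) ω)ᵀ)))

/-- The `k × k` leading principal submatrix. -/
def subK {N k : ℕ} (hk : k ≤ N) (x : Mat N) : Mat k :=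
  x.submatrix (Fin.castLE hk) (Fin.castLE hk)

end

noncomputable section
namespace OF
open RealInnerProductSpace Finset InnerProductSpace
variable {N : ℕ}
abbrev E (N : ℕ) := EuclideanSpace ℝ (Fin N)
def extF (x : Mat N) : Fin (N + N) → E N :=
  fun k => Fin.addCases (fun i => (WithLp.toLp 2 (x i) : E N)) (fun i => EuclideanSpace.single i 1) k
def gs (x : Mat N) (k : Fin (N + N)) : E N :=
  letI : WellFoundedLT (Fin (N + N)) := inferInstance
  gramSchmidt ℝ (extF x) k
def gsN (x : Mat N) (k : Fin (N + N)) : E N :=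
  letI : WellFoundedLT (Fin (N + N)) := inferInstance
  gramSchmidtNormed ℝ (extF x) k
lemma gsN_eq (x : Mat N) (k : Fin (N + N)) : gsN x k = (‖gs x k‖ : ℝ)⁻¹ • gs x k := rfl
lemma inner_eq (x y : E N) : ⟪x, y⟫ = ∑ j, x j * y j := by
  rw [PiLp.inner_apply]; simp [mul_comm]
lemma extF_castAdd (x : Mat N) (i : Fin N) : extF x (Fin.castAdd N i) = (WithLp.toLp 2 (x i) : E N) := by
  simp [extF]
lemma inner_extF (x : Mat N) (i j : Fin N) :
    ⟪extF x (Fin.castAdd N i), extF x (Fin.castAdd N j)⟫ = (x * xᵀ) i j := by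
  rw [extF_castAdd, extF_castAdd, inner_eq, Matrix.mul_apply]
  simp [Matrix.transpose_apply]
lemma inner_gs_self (x : Mat N) (k : Fin (N + N)) : ⟪gs x k, extF x k⟫ = ‖gs x k‖ ^ 2 := by
  letI : WellFoundedLT (Fin (N + N)) := inferInstance
  conv_lhs => rw [gs, gramSchmidt_def'' ℝ (extF x) k]
  rw [inner_add_right, real_inner_self_eq_norm_sq, inner_sum, gs, add_eq_left]
  refine Finset.sum_eq_zero fun i hi => ?_
  rw [inner_smul_right, gramSchmidt_orthogonal ℝ (extF x) (Finset.mem_Iio.mp hi).ne', mul_zero]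

lemma gs_inner_expand (x : Mat N) (j i : Fin (N + N)) :
    ⟪gs x j, extF x i⟫ = ⟪extF x j, extF x i⟫ -
      ∑ l ∈ Finset.Iio j, (⟪gs x l, extF x j⟫ / ‖gs x l‖ ^ 2) * ⟪gs x l, extF x i⟫ := by
  letI : WellFoundedLT (Fin (N + N)) := inferInstance
  have h := gramSchmidt_def'' ℝ (extF x) j
  have h2 := congrArg (fun v : E N => ⟪v, extF x i⟫) h
  simp only [inner_add_left, sum_inner, inner_smul_left, RCLike.ofReal_real_eq_id, id,
    starRingEnd_apply, star_trivial] at h2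
  simp only [gs] at h2 ⊢
  rw [h2]
  ring

lemma extF_inner_eq {a b : Mat N} (hab : b * bᵀ = a * aᵀ) {i j : Fin (N + N)}
    (hi : (i : ℕ) < N) (hj : (j : ℕ) < N) : ⟪extF a i, extF a j⟫ = ⟪extF b i, extF b j⟫ := by
  have hi' : i = Fin.castAdd N ⟨i, hi⟩ := by ext; simp
  have hj' : j = Fin.castAdd N ⟨j, hj⟩ := by ext; simp
  rw [hi', hj', inner_extF, inner_extF, hab]

lemma norm_gs_sq_eq {a b : Mat N} (hab : b * bᵀ = a * aᵀ) :
    True := trivial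

lemma core {a b : Mat N} (hab : b * bᵀ = a * aᵀ) :
    ∀ j i : Fin (N + N), (j : ℕ) < N → (i : ℕ) < N →
      ⟪gs a j, extF a i⟫ = ⟪gs b j, extF b i⟫ := by
  letI : WellFoundedLT (Fin (N + N)) := inferInstance
  intro j
  refine wellFounded_lt.induction
    (C := fun (j : Fin (N + N)) => ∀ i : Fin (N + N), (j : ℕ) < N → (i : ℕ) < N →
      ⟪gs a j, extF a i⟫ = ⟪gs b j, extF b i⟫) j ?_
  clear j
  intro j IH i hj hi
  rw [gs_inner_expand, gs_inner_expand, extF_inner_eq hab hj hi]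
  congr 1
  refine Finset.sum_congr rfl fun l hl => ?_
  have hlj : l < j := Finset.mem_Iio.mp hl
  have hlN : (l : ℕ) < N := lt_of_lt_of_le (by exact_mod_cast hlj) hj.le
  have h1 : ⟪gs a l, extF a j⟫ = ⟪gs b l, extF b j⟫ := IH l hlj j hlN hj
  have h2 : ⟪gs a l, extF a i⟫ = ⟪gs b l, extF b i⟫ := IH l hlj i hlN hi
  have h3 : ‖gs a l‖ ^ 2 = ‖gs b l‖ ^ 2 := by
    rw [← inner_gs_self, ← inner_gs_self]; exact IH l hlj l hlN hlN
  rw [h1, h2, h3]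
lemma norm_gs_eq {a b : Mat N} (hab : b * bᵀ = a * aᵀ) {j : Fin (N + N)} (hj : (j : ℕ) < N) :
    ‖gs a j‖ = ‖gs b j‖ := by
  have h := core hab j j hj hj
  rw [inner_gs_self, inner_gs_self] at h
  rw [← Real.sqrt_sq (norm_nonneg (gs a j)), h, Real.sqrt_sq (norm_nonneg _)]

lemma gsN_eq_zero_iff (x : Mat N) (k : Fin (N + N)) : gsN x k = 0 ↔ gs x k = 0 := by
  rw [gsN_eq, smul_eq_zero, inv_eq_zero, norm_eq_zero, or_self]

lemma gsN_zero_pair {a b : Mat N} (hab : b * bᵀ = a * aᵀ) {j : Fin (N + N)} (hj : (j : ℕ) < N) :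
    (gsN a j = 0 ↔ gsN b j = 0) := by
  rw [gsN_eq_zero_iff, gsN_eq_zero_iff, ← norm_eq_zero (a := gs a j),
    ← norm_eq_zero (a := gs b j), norm_gs_eq hab hj]

lemma inner_gsN_eq {a b : Mat N} (hab : b * bᵀ = a * aᵀ) {j i : Fin (N + N)}
    (hj : (j : ℕ) < N) (hi : (i : ℕ) < N) :
    ⟪gsN a j, extF a i⟫ = ⟪gsN b j, extF b i⟫ := by
  rw [gsN_eq, gsN_eq, real_inner_smul_left, real_inner_smul_left,
    norm_gs_eq hab hj, core hab j i hj hi]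

lemma inner_gsN_self {x : Mat N} {k : Fin (N + N)} (h : gsN x k ≠ 0) :
    ⟪gsN x k, gsN x k⟫ = 1 := by
  letI : WellFoundedLT (Fin (N + N)) := inferInstance
  have := gramSchmidtNormed_unit_length' (f := extF x) (n := k) h
  rw [real_inner_self_eq_norm_sq, show gsN x k = gramSchmidtNormed ℝ (extF x) k from rfl, this]
  norm_num

lemma inner_gsN_ne (x : Mat N) {k l : Fin (N + N)} (h : k ≠ l) :
    ⟪gsN x k, gsN x l⟫ = 0 := by
  rw [gsN_eq, gsN_eq, real_inner_smul_left, real_inner_smul_right]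
  letI : WellFoundedLT (Fin (N + N)) := inferInstance
  rw [gs, gs, gramSchmidt_orthogonal ℝ (extF x) h, mul_zero, mul_zero]

open scoped Classical in
def Spat (x : Mat N) : Finset (Fin (N + N)) := Finset.univ.filter (fun k => gsN x k ≠ 0)

lemma mem_Spat {x : Mat N} {k : Fin (N + N)} : k ∈ Spat x ↔ gsN x k ≠ 0 := by
  classical
  simp [Spat]

lemma span_extF (x : Mat N) : Submodule.span ℝ (Set.range (extF x)) = ⊤ := by
  apply top_unique
  rw [← (EuclideanSpace.basisFun (Fin N) ℝ).toBasis.span_eq]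
  refine Submodule.span_le.mpr ?_
  rintro v ⟨i, rfl⟩
  have hext : extF x (Fin.natAdd N i) = EuclideanSpace.single i 1 := by
    simp only [extF]; rw [Fin.addCases_right]
  refine Submodule.subset_span ⟨Fin.natAdd N i, ?_⟩
  rw [hext, OrthonormalBasis.coe_toBasis, EuclideanSpace.basisFun_apply]

lemma card_Spat (x : Mat N) : (Spat x).card = N := by
  classical
  letI : WellFoundedLT (Fin (N + N)) := inferInstance
  have horth : Orthonormal ℝ (fun k : {k // k ∈ Spat x} => gsN x k) := by
    constructor
    · intro k
      exact gramSchmidtNormed_unit_length' (mem_Spat.mp k.2)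
    · intro k l hkl
      exact inner_gsN_ne x (fun h => hkl (Subtype.ext h))
  have hle : (Spat x).card ≤ N := by
    have := horth.linearIndependent.fintype_card_le_finrank
    rwa [Fintype.card_coe, finrank_euclideanSpace_fin] at this
  have hspan : Submodule.span ℝ (((Spat x).image (gsN x) : Finset (E N)) : Set (E N)) = ⊤ := by
    apply top_unique
    rw [← span_extF x, ← span_gramSchmidt ℝ (extF x), ← span_gramSchmidtNormed_range]
    refine Submodule.span_le.mpr ?_
    rintro v ⟨k, rfl⟩
    by_cases h : gramSchmidtNormed ℝ (extF x) k = 0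
    · rw [h]; exact Submodule.zero_mem _
    · exact Submodule.subset_span (by
        simp only [Finset.coe_image, Set.mem_image, Finset.mem_coe]
        exact ⟨k, mem_Spat.mpr h, rfl⟩)
  have hge : N ≤ (Spat x).card := by
    have h1 := finrank_span_finset_le_card (R := ℝ) ((Spat x).image (gsN x))
    rw [Set.finrank, hspan] at h1
    rw [finrank_top, finrank_euclideanSpace_fin] at h1
    exact h1.trans Finset.card_image_le
  omega

def TofS (S₀ : Finset (Fin (N + N))) : Finset (Fin N) :=
  Finset.univ.filter (fun k => Fin.castAdd N k ∈ S₀)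

def RofS (S₀ : Finset (Fin (N + N))) : Finset (Fin (N + N)) :=
  S₀.filter (fun j => ¬ (j : ℕ) < N)

def rnk (T₀ : Finset (Fin N)) (k : Fin N) : ℕ :=
  ((Finset.univ \ T₀).filter (fun l => l < k)).card

def eIdx (S₀ : Finset (Fin (N + N))) (k : Fin N) : Fin (N + N) :=
  if k ∈ TofS S₀ then Fin.castAdd N k
  else ((RofS S₀).sort (· ≤ ·)).getD (rnk (TofS S₀) k) (Fin.castAdd N k)

lemma card_TofS_add_card_RofS {S₀ : Finset (Fin (N + N))} :
    (TofS S₀).card + (RofS S₀).card = S₀.card := by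
  have h1 : (TofS S₀).card = (S₀.filter (fun j : Fin (N + N) => (j : ℕ) < N)).card := by
    refine Finset.card_bij (fun k _ => Fin.castAdd N k) ?_ ?_ ?_
    · intro k hk
      simp only [TofS, Finset.mem_filter, Finset.mem_univ, true_and] at hk
      simp [Finset.mem_filter, hk]
    · intro k _ l _ h
      exact Fin.castAdd_injective _ _ h
    · intro j hj
      simp only [Finset.mem_filter] at hj
      refine ⟨⟨(j : ℕ), hj.2⟩, ?_, ?_⟩
      · simp only [TofS, Finset.mem_filter, Finset.mem_univ, true_and]
        have : Fin.castAdd N (⟨(j : ℕ), hj.2⟩ : Fin N) = j := by ext; simp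
        rw [this]; exact hj.1
      · ext; simp
  rw [h1, RofS]
  exact Finset.card_filter_add_card_filter_not _

lemma card_RofS {S₀ : Finset (Fin (N + N))} (hS : S₀.card = N) :
    (RofS S₀).card = N - (TofS S₀).card := by
  have := card_TofS_add_card_RofS (S₀ := S₀)
  omega

lemma rnk_lt {T₀ : Finset (Fin N)} {k : Fin N} (hk : k ∉ T₀) :
    rnk T₀ k < N - T₀.card := by
  have hmem : k ∈ Finset.univ \ T₀ := by simp [hk]
  have hsub : ((Finset.univ \ T₀).filter (fun l => l < k)) ⊆ (Finset.univ \ T₀).erase k := by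
    intro l hl
    simp only [Finset.mem_filter] at hl
    exact Finset.mem_erase.mpr ⟨hl.2.ne, hl.1⟩
  have h1 : rnk T₀ k ≤ ((Finset.univ \ T₀).erase k).card := Finset.card_le_card hsub
  have h2 : ((Finset.univ \ T₀).erase k).card = (Finset.univ \ T₀).card - 1 :=
    Finset.card_erase_of_mem hmem
  have h3 : (Finset.univ \ T₀).card = N - T₀.card := by
    rw [Finset.card_sdiff_of_subset (Finset.subset_univ _), Finset.card_univ, Fintype.card_fin]
  have h4 : 0 < (Finset.univ \ T₀).card := Finset.card_pos.mpr ⟨k, hmem⟩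
  omega

lemma rnk_strictMono {T₀ : Finset (Fin N)} {k l : Fin N} (hk : k ∉ T₀) (hkl : k < l) :
    rnk T₀ k < rnk T₀ l := by
  apply Finset.card_lt_card
  constructor
  · intro j hj
    simp only [Finset.mem_filter] at hj ⊢
    exact ⟨hj.1, hj.2.trans hkl⟩
  · intro hsub
    have : k ∈ (Finset.univ \ T₀).filter (fun j => j < l) := by simp [hk, hkl]
    have hk2 := hsub this
    simp at hk2

lemma rnk_inj {T₀ : Finset (Fin N)} {k l : Fin N} (hk : k ∉ T₀) (hl : l ∉ T₀)
    (h : rnk T₀ k = rnk T₀ l) : k = l := by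
  rcases lt_trichotomy k l with hlt | heq | hgt
  · exact absurd h (rnk_strictMono hk hlt).ne
  · exact heq
  · exact absurd h.symm (rnk_strictMono hl hgt).ne

lemma eIdx_of_mem {S₀ : Finset (Fin (N + N))} {k : Fin N} (hk : k ∈ TofS S₀) :
    eIdx S₀ k = Fin.castAdd N k := if_pos hk

lemma eIdx_mem_RofS {S₀ : Finset (Fin (N + N))} (hS : S₀.card = N) {k : Fin N}
    (hk : k ∉ TofS S₀) : eIdx S₀ k ∈ RofS S₀ := by
  rw [eIdx, if_neg hk]
  have hT : (TofS S₀).card ≤ N := by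
    have := Finset.card_le_univ (TofS S₀); simpa using this
  have hlen : rnk (TofS S₀) k < ((RofS S₀).sort (· ≤ ·)).length := by
    rw [Finset.length_sort, card_RofS hS]
    exact rnk_lt hk
  rw [List.getD_eq_getElem _ _ hlen]
  have := List.getElem_mem hlen
  rwa [Finset.mem_sort] at this

lemma eIdx_mem {S₀ : Finset (Fin (N + N))} (hS : S₀.card = N) (k : Fin N) :
    eIdx S₀ k ∈ S₀ := by
  by_cases hk : k ∈ TofS S₀
  · rw [eIdx_of_mem hk]
    simpa [TofS] using hk
  · exact Finset.mem_of_mem_filter _ (eIdx_mem_RofS hS hk)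

lemma eIdx_lt_iff {S₀ : Finset (Fin (N + N))} (hS : S₀.card = N) {k : Fin N} :
    (eIdx S₀ k : ℕ) < N ↔ k ∈ TofS S₀ := by
  by_cases hk : k ∈ TofS S₀
  · simp [eIdx_of_mem hk, hk, k.2]
  · simp only [hk, iff_false, not_lt]
    have := eIdx_mem_RofS hS hk
    rw [RofS, Finset.mem_filter] at this
    omega

lemma eIdx_inj {S₀ : Finset (Fin (N + N))} (hS : S₀.card = N) :
    Function.Injective (eIdx S₀) := by
  intro k l h
  by_cases hk : k ∈ TofS S₀ <;> by_cases hl : l ∈ TofS S₀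
  · rw [eIdx_of_mem hk, eIdx_of_mem hl] at h
    exact Fin.castAdd_injective _ _ h
  · exact absurd (h ▸ (eIdx_lt_iff hS).mpr hk) (by simp [eIdx_lt_iff hS, hl])
  · exact absurd (h ▸ (eIdx_lt_iff hS).mpr hl) (by simp [← h, eIdx_lt_iff hS, hk])
  · rw [eIdx, if_neg hk, eIdx, if_neg hl] at h
    have hlen : ∀ m : Fin N, m ∉ TofS S₀ → rnk (TofS S₀) m < ((RofS S₀).sort (· ≤ ·)).length := by
      intro m hm
      rw [Finset.length_sort, card_RofS hS]
      exact rnk_lt hm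
    rw [List.getD_eq_getElem _ _ (hlen k hk), List.getD_eq_getElem _ _ (hlen l hl)] at h
    have hnd := Finset.sort_nodup (RofS S₀) (· ≤ ·)
    have := List.Nodup.getElem_inj_iff hnd |>.mp h
    exact rnk_inj hk hl this

def psi (x : Mat N) : Mat N := fun k j => gsN x (eIdx (Spat x) k) j

lemma psi_row (x : Mat N) (k : Fin N) : (fun j => psi x k j) = gsN x (eIdx (Spat x) k) := rfl

lemma psi_mul_transpose (x : Mat N) : psi x * (psi x)ᵀ = 1 := by
  ext k l
  rw [Matrix.mul_apply, Matrix.one_apply]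
  have h : ∑ j, psi x k j * (psi x)ᵀ j l
      = ⟪gsN x (eIdx (Spat x) k), gsN x (eIdx (Spat x) l)⟫ := by
    rw [inner_eq]
    simp [psi, Matrix.transpose_apply]
  rw [h]
  by_cases hkl : k = l
  · subst hkl
    rw [if_pos rfl]
    exact inner_gsN_self (mem_Spat.mp (eIdx_mem (card_Spat x) k))
  · rw [if_neg hkl]
    exact inner_gsN_ne x (fun h => hkl (eIdx_inj (card_Spat x) h))

lemma transpose_mul_psi (x : Mat N) : (psi x)ᵀ * psi x = 1 :=
  mul_eq_one_comm.mp (psi_mul_transpose x)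

lemma TofS_pair {a b : Mat N} (hab : b * bᵀ = a * aᵀ) : TofS (Spat a) = TofS (Spat b) := by
  ext k
  simp only [TofS, Finset.mem_filter, Finset.mem_univ, true_and, mem_Spat]
  have := gsN_zero_pair hab (j := Fin.castAdd N k) (by simp [k.2])
  tauto

lemma entry_inner (x : Mat N) (i k : Fin N) :
    (x * (psi x)ᵀ) i k = ⟪gsN x (eIdx (Spat x) k), extF x (Fin.castAdd N i)⟫ := by
  rw [Matrix.mul_apply, inner_eq, extF_castAdd]
  simp only [Matrix.transpose_apply, psi]
  exact Finset.sum_congr rfl fun j _ => mul_comm _ _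

lemma inner_gsN_hi (x : Mat N) {j : Fin (N + N)} {i : Fin N} (hj : N ≤ (j : ℕ)) :
    ⟪gsN x j, extF x (Fin.castAdd N i)⟫ = 0 := by
  letI : WellFoundedLT (Fin (N + N)) := inferInstance
  rw [gsN_eq, real_inner_smul_left]
  have hlt : Fin.castAdd N i < j := by
    rw [Fin.lt_def]
    simp only [Fin.coe_castAdd]
    exact lt_of_lt_of_le i.2 hj
  rw [gs, gramSchmidt_inv_triangular ℝ (extF x) hlt, mul_zero]

lemma key_identity {a b : Mat N} (hab : b * bᵀ = a * aᵀ) :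
    a * (psi a)ᵀ = b * (psi b)ᵀ := by
  ext i k
  rw [entry_inner, entry_inner]
  by_cases hk : k ∈ TofS (Spat a)
  · have hk' : k ∈ TofS (Spat b) := TofS_pair hab ▸ hk
    rw [eIdx_of_mem hk, eIdx_of_mem hk']
    exact inner_gsN_eq hab (by simp [k.2]) (by simp [i.2])
  · have hk' : k ∉ TofS (Spat b) := (TofS_pair hab) ▸ hk
    have ha : N ≤ (eIdx (Spat a) k : ℕ) := by
      have := (eIdx_lt_iff (card_Spat a) (k := k)).not.mpr hk
      omega
    have hb : N ≤ (eIdx (Spat b) k : ℕ) := by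
      have := (eIdx_lt_iff (card_Spat b) (k := k)).not.mpr hk'
      omega
    rw [inner_gsN_hi a ha, inner_gsN_hi b hb]

lemma factor {a b : Mat N} (hab : b * bᵀ = a * aᵀ) :
    b * ((psi b)ᵀ * psi a) = a := by
  rw [← Matrix.mul_assoc, ← key_identity hab, Matrix.mul_assoc, transpose_mul_psi,
    Matrix.mul_one]

lemma orth_u (a b : Mat N) :
    ((psi b)ᵀ * psi a) * ((psi b)ᵀ * psi a)ᵀ = 1 := by
  rw [Matrix.transpose_mul, Matrix.transpose_transpose, Matrix.mul_assoc,
    ← Matrix.mul_assoc (psi a), psi_mul_transpose, Matrix.one_mul, transpose_mul_psi]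

lemma gs_expand (x : Mat N) (k : Fin (N + N)) :
    gs x k = extF x k - ∑ l ∈ Finset.Iio k,
      (⟪gs x l, extF x k⟫ / ‖gs x l‖ ^ 2) • gs x l := by
  letI : WellFoundedLT (Fin (N + N)) := inferInstance
  have h := gramSchmidt_def'' ℝ (extF x) k
  simp only [RCLike.ofReal_real_eq_id, id] at h
  simp only [gs]
  exact eq_sub_of_add_eq h.symm

lemma meas_extF (k : Fin (N + N)) : Measurable (fun x : Mat N => extF x k) := by
  refine Fin.addCases (motive := fun k => Measurable (fun x : Mat N => extF x k)) ?_ ?_ k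
  · intro i
    have : (fun x : Mat N => extF x (Fin.castAdd N i)) = fun x : Mat N => (WithLp.toLp 2 (x i) : E N) := by
      funext x; exact extF_castAdd x i
    rw [this]
    exact (WithLp.measurable_toLp 2 _).comp (measurable_pi_apply i)
  · intro i
    have : (fun x : Mat N => extF x (Fin.natAdd N i)) = fun _ => EuclideanSpace.single i 1 := by
      funext x; simp only [extF]; rw [Fin.addCases_right]
    rw [this]
    exact measurable_const

lemma meas_gs (k : Fin (N + N)) : Measurable (fun x : Mat N => gs x k) := by
  letI : WellFoundedLT (Fin (N + N)) := inferInstance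
  refine wellFounded_lt.induction
    (C := fun k : Fin (N + N) => Measurable (fun x : Mat N => gs x k)) k ?_
  clear k
  intro k IH
  have : (fun x : Mat N => gs x k) = fun x : Mat N => extF x k - ∑ l ∈ Finset.Iio k,
      (⟪gs x l, extF x k⟫ / ‖gs x l‖ ^ 2) • gs x l := by
    funext x; exact gs_expand x k
  rw [this]
  refine (meas_extF k).sub ?_
  refine Finset.measurable_sum _ fun l hl => ?_
  have hlk : l < k := Finset.mem_Iio.mp hl
  exact (((IH l hlk).inner (meas_extF k)).div (((IH l hlk).norm).pow measurable_const)).smul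
    (IH l hlk)

lemma meas_gsN (k : Fin (N + N)) : Measurable (fun x : Mat N => gsN x k) := by
  have : (fun x : Mat N => gsN x k) = fun x : Mat N => (‖gs x k‖)⁻¹ • gs x k := by
    funext x; exact gsN_eq x k
  rw [this]
  exact ((meas_gs k).norm.inv).smul (meas_gs k)

lemma measSet_Spat (S₀ : Finset (Fin (N + N))) : MeasurableSet {x : Mat N | Spat x = S₀} := by
  have heq : {x : Mat N | Spat x = S₀} = ⋂ k, {x : Mat N | gsN x k ≠ 0 ↔ k ∈ S₀} := by
    ext x
    simp only [Set.mem_setOf_eq, Set.mem_iInter, Finset.ext_iff, mem_Spat]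
  rw [heq]
  refine MeasurableSet.iInter fun k => ?_
  by_cases hk : k ∈ S₀
  · have : {x : Mat N | gsN x k ≠ 0 ↔ k ∈ S₀} = {x : Mat N | gsN x k ≠ 0} := by
      ext x; simp [hk]
    rw [this]
    exact (meas_gsN k (measurableSet_singleton 0)).compl
  · have : {x : Mat N | gsN x k ≠ 0 ↔ k ∈ S₀} = {x : Mat N | gsN x k = 0} := by
      ext x; simp [hk]
    rw [this]
    exact meas_gsN k (measurableSet_singleton 0)

lemma meas_psi : Measurable (psi : Mat N → Mat N) := by
  refine measurable_pi_iff.mpr ?_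
  intro k
  rw [measurable_pi_iff]
  intro j
  classical
  have heq : (fun x : Mat N => psi x k j) = fun x : Mat N =>
      ∑ S₀ ∈ (Finset.univ : Finset (Finset (Fin (N + N)))),
        if Spat x = S₀ then gsN x (eIdx S₀ k) j else 0 := by
    funext x
    rw [Finset.sum_ite_eq]
    simp [psi]
  rw [heq]
  refine Finset.measurable_sum _ fun S₀ _ => ?_
  refine Measurable.ite (measSet_Spat S₀) ?_ measurable_const
  exact (measurable_pi_apply j).comp ((WithLp.measurable_ofLp 2 _).comp (meas_gsN (eIdx S₀ k)))

end OF
end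

/-- If `m : Mat(N,ℝ) → Mat(N,ℝ)` is measurable with `m(a) m(a)ᵀ = a aᵀ`
for every `a`, then for any random matrix `A` there is a random orthogonal matrix `U`,
measurable with respect to `σ(A)`, such that `A = m(A) U` almost surely. -/
theorem exists_measurable_orthogonal_factor
    {N : ℕ} {Ω : Type*} [MeasurableSpace Ω] (P : Measure Ω) [IsProbabilityMeasure P]
    (A : Ω → Mat N) (hA : Measurable A)
    (m : Mat N → Mat N) (hm : Measurable m) (hmm : ∀ a : Mat N, m a * (m a)ᵀ = a * aᵀ) :
    ∃ U : Ω → Mat N,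
      Measurable[MeasurableSpace.comap A inferInstance] U ∧
      (∀ ω, U ω * (U ω)ᵀ = 1) ∧
      ∀ᵐ ω ∂P, A ω = m (A ω) * U ω := by
  set g : Mat N → Mat N := fun x => (OF.psi (m x))ᵀ * OF.psi x with hg
  have hgmeas : Measurable g := by
    refine measurable_pi_iff.mpr ?_
    intro i
    rw [measurable_pi_iff]
    intro j
    have : (fun x : Mat N => g x i j) =
        fun x : Mat N => ∑ k, OF.psi (m x) k i * OF.psi x k j := by
      funext x
      rw [hg]
      simp [Matrix.mul_apply, Matrix.transpose_apply]
    rw [this]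
    refine Finset.measurable_sum _ fun k _ => Measurable.mul ?_ ?_
    · exact (measurable_pi_apply i).comp ((measurable_pi_apply k).comp (OF.meas_psi.comp hm))
    · exact (measurable_pi_apply j).comp ((measurable_pi_apply k).comp OF.meas_psi)
  refine ⟨fun ω => g (A ω), ?_, ?_, ?_⟩
  · intro t ht
    exact MeasurableSpace.measurableSet_comap.mpr ⟨g ⁻¹' t, hgmeas ht, rfl⟩
  · intro ω
    exact OF.orth_u (A ω) (m (A ω))
  · refine Filter.Eventually.of_forall fun ω => ?_
    exact (OF.factor (hmm (A ω))).symm
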